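/- The polynomial sequence ℝ → Q_{k-1}(D;ℝ) --∇--> M_{[k-1]}(D;ℝ³) --curl--> V_{[k-1]}(D;ℝ³) --div--> Q_{k-2}(D;ℝ) → 0 is an exact complex on a contractible domain D ⊆ ℝ³: the kernel of ∇ is the constants, the kernel of curl in M_{[k-1]} equals ∇Q_{k-1}, the kernel of div in V_{[k-1]} equals curl M_{[k-1]}, and div is onto Q_{k-2}. -/

import Mathlib

open MvPolynomial

noncomputable section

abbrev P3 : Type := MvPolynomial (Fin 3) ℝ

/-- `Qb m q` : `q` has degree at most `m` in each of the three variables. -/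
def Qb (m : ℕ) (q : P3) : Prop := ∀ i, q.degreeOf i ≤ m

/-- Membership in `M_{[k-1]} = P_{k-2,k-1,k-1} × P_{k-1,k-2,k-1} × P_{k-1,k-1,k-2}`. -/
def Mb (k : ℕ) (u : Fin 3 → P3) : Prop :=
  ∀ i j, (u i).degreeOf j ≤ if j = i then k - 2 else k - 1

/-- Membership in `V_{[k-1]} = P_{k-1,k-2,k-2} × P_{k-2,k-1,k-2} × P_{k-2,k-2,k-1}`. -/
def Vb (k : ℕ) (v : Fin 3 → P3) : Prop :=
  ∀ i j, (v i).degreeOf j ≤ if j = i then k - 1 else k - 2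

/-- Gradient of a polynomial. -/
def gradP (q : P3) : Fin 3 → P3 := fun i => pderiv i q

/-- Curl of a polynomial vector field. -/
def curlP (w : Fin 3 → P3) : Fin 3 → P3 :=
  ![pderiv 1 (w 2) - pderiv 2 (w 1),
    pderiv 2 (w 0) - pderiv 0 (w 2),
    pderiv 0 (w 1) - pderiv 1 (w 0)]

/-- Divergence of a polynomial vector field. -/
def divP (v : Fin 3 → P3) : P3 := ∑ i, pderiv i (v i)

/-- coefficient formula for pderiv -/
theorem coeff_pderiv' (i : Fin 3) (p : P3) (n : Fin 3 →₀ ℕ) :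
    coeff n (pderiv i p) = (n i + 1 : ℝ) * coeff (n + Finsupp.single i 1) p := by
  induction p using MvPolynomial.induction_on' with
  | add p q hp hq => simp [hp, hq, mul_add]
  | monomial s a =>
    rw [pderiv_monomial]
    simp only [coeff_monomial]
    by_cases h : s = n + Finsupp.single i 1
    · subst h
      rw [if_pos (add_tsub_cancel_right _ _), if_pos rfl]
      simp [mul_comm]
    · rw [if_neg h]
      by_cases h2 : s - Finsupp.single i 1 = n
      · rw [if_pos h2]
        have hsi : s i = 0 := by
          by_contra hs
          apply h
          rw [← h2]
          ext j
          simp only [Finsupp.add_apply, Finsupp.tsub_apply]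
          by_cases hj : i = j
          · subst hj; rw [Finsupp.single_eq_same]; omega
          · rw [Finsupp.single_eq_of_ne' hj]; omega
        simp [hsi]
      · rw [if_neg h2]; ring

/-- antiderivative in variable i -/
def integ (i : Fin 3) (p : P3) : P3 :=
  ∑ m ∈ p.support, monomial (m + Finsupp.single i 1) (coeff m p / (m i + 1))

/-- substitute 0 for variable i -/
def sub0 (i : Fin 3) (p : P3) : P3 :=
  ∑ m ∈ p.support, if m i = 0 then monomial m (coeff m p) else 0

theorem coeff_sub0 (i : Fin 3) (p : P3) (n : Fin 3 →₀ ℕ) :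
    coeff n (sub0 i p) = if n i = 0 then coeff n p else 0 := by
  rw [sub0, coeff_sum]
  rw [Finset.sum_eq_single n (fun m _ hmn => ?_) (fun hn => ?_)]
  · split_ifs with h
    · simp [coeff_monomial]
    · simp
  · split_ifs with h
    · rw [coeff_monomial, if_neg hmn]
    · simp
  · rw [MvPolynomial.notMem_support_iff] at hn
    simp [hn, coeff_monomial]

theorem coeff_integ (i : Fin 3) (p : P3) (n : Fin 3 →₀ ℕ) :
    coeff n (integ i p) =
      if n i = 0 then 0 else coeff (n - Finsupp.single i 1) p / (n i : ℝ) := by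
  rw [integ, coeff_sum]
  by_cases hn : n i = 0
  · rw [if_pos hn, Finset.sum_eq_zero]
    intro m _
    rw [coeff_monomial, if_neg]
    intro h
    apply absurd hn
    rw [← h]
    simp
  · rw [if_neg hn]
    have key : n - Finsupp.single i 1 + Finsupp.single i 1 = n := by
      ext j
      simp only [Finsupp.add_apply, Finsupp.tsub_apply]
      by_cases hj : i = j
      · subst hj; rw [Finsupp.single_eq_same]; omega
      · rw [Finsupp.single_eq_of_ne' hj]; omega
    rw [Finset.sum_eq_single (n - Finsupp.single i 1) (fun m _ hmn => ?_) (fun hns => ?_)]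
    · rw [coeff_monomial, if_pos key]
      have h1 : 1 ≤ n i := Nat.one_le_iff_ne_zero.mpr hn
      have h2 : ((n - Finsupp.single i 1 : Fin 3 →₀ ℕ)) i = n i - 1 := by
        rw [Finsupp.tsub_apply, Finsupp.single_eq_same]
      rw [h2]
      congr 1
      rw [Nat.cast_sub h1]
      push_cast
      ring
    · rw [coeff_monomial, if_neg]
      intro h
      apply hmn
      rw [← h, add_tsub_cancel_right]
    · rw [MvPolynomial.notMem_support_iff] at hns
      simp [hns, coeff_monomial]

theorem add_single_apply_same (n : Fin 3 →₀ ℕ) (i : Fin 3) :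
    ((n + Finsupp.single i 1 : Fin 3 →₀ ℕ)) i = n i + 1 := by
  rw [Finsupp.add_apply, Finsupp.single_eq_same]

theorem add_single_apply_ne (n : Fin 3 →₀ ℕ) {i j : Fin 3} (h : i ≠ j) :
    ((n + Finsupp.single i 1 : Fin 3 →₀ ℕ)) j = n j := by
  rw [Finsupp.add_apply, Finsupp.single_eq_of_ne' h, add_zero]

theorem sub_single_add_single {n : Fin 3 →₀ ℕ} {i : Fin 3} (h : n i ≠ 0) :
    n - Finsupp.single i 1 + Finsupp.single i 1 = n := by
  ext l
  simp only [Finsupp.add_apply, Finsupp.tsub_apply]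
  by_cases hl : i = l
  · subst hl; rw [Finsupp.single_eq_same]; omega
  · rw [Finsupp.single_eq_of_ne' hl]; omega

theorem add_single_sub_single {n : Fin 3 →₀ ℕ} {i j : Fin 3} (h : j ≠ i) :
    n + Finsupp.single j 1 - Finsupp.single i 1
      = n - Finsupp.single i 1 + Finsupp.single j 1 := by
  ext l
  simp only [Finsupp.add_apply, Finsupp.tsub_apply, Finsupp.single_apply]
  split_ifs with h1 h2
  · exact absurd (h1.trans h2.symm) h
  all_goals omega

theorem sub_single_apply_ne {n : Fin 3 →₀ ℕ} {i j : Fin 3} (h : i ≠ j) :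
    ((n - Finsupp.single i 1 : Fin 3 →₀ ℕ)) j = n j := by
  rw [Finsupp.tsub_apply, Finsupp.single_eq_of_ne' h]
  omega

theorem sub_single_apply_same (n : Fin 3 →₀ ℕ) (i : Fin 3) :
    ((n - Finsupp.single i 1 : Fin 3 →₀ ℕ)) i = n i - 1 := by
  rw [Finsupp.tsub_apply, Finsupp.single_eq_same]

theorem ncast_ne_zero (n : Fin 3 →₀ ℕ) (i : Fin 3) : ((n i : ℝ) + 1) ≠ 0 := by
  positivity

theorem pderiv_integ_self (i : Fin 3) (p : P3) : pderiv i (integ i p) = p := by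
  ext n
  rw [coeff_pderiv', coeff_integ, if_neg (by rw [add_single_apply_same]; omega),
    add_tsub_cancel_right, add_single_apply_same]
  push_cast
  rw [mul_div_cancel₀ _ (ncast_ne_zero n i)]

theorem pderiv_integ_comm {i j : Fin 3} (h : j ≠ i) (p : P3) :
    pderiv j (integ i p) = integ i (pderiv j p) := by
  ext n
  rw [coeff_pderiv', coeff_integ, coeff_integ, add_single_apply_ne n h]
  by_cases hn : n i = 0
  · rw [if_pos hn, if_pos hn, mul_zero]
  · rw [if_neg hn, if_neg hn, coeff_pderiv', add_single_sub_single h,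
      sub_single_apply_ne (fun hh => h hh.symm)]
    ring

theorem integ_pderiv_self (i : Fin 3) (p : P3) :
    integ i (pderiv i p) = p - sub0 i p := by
  ext n
  rw [coeff_integ, MvPolynomial.coeff_sub, coeff_sub0]
  by_cases hn : n i = 0
  · rw [if_pos hn, if_pos hn]; ring
  · rw [if_neg hn, if_neg hn, coeff_pderiv', sub_single_add_single hn,
      sub_single_apply_same]
    have h1 : 1 ≤ n i := Nat.one_le_iff_ne_zero.mpr hn
    have hni : (n i : ℝ) ≠ 0 := Nat.cast_ne_zero.mpr hn
    rw [Nat.cast_sub h1, sub_zero]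
    push_cast
    rw [sub_add_cancel, mul_div_cancel_left₀ _ hni]

theorem pderiv_sub0_self (i : Fin 3) (p : P3) : pderiv i (sub0 i p) = 0 := by
  ext n
  rw [coeff_pderiv', coeff_sub0, if_neg (by rw [add_single_apply_same]; omega),
    mul_zero, coeff_zero]

theorem pderiv_sub0_comm {i j : Fin 3} (h : j ≠ i) (p : P3) :
    pderiv j (sub0 i p) = sub0 i (pderiv j p) := by
  ext n
  rw [coeff_pderiv', coeff_sub0, coeff_sub0, add_single_apply_ne n h]
  by_cases hn : n i = 0
  · rw [if_pos hn, if_pos hn, coeff_pderiv']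
  · rw [if_neg hn, if_neg hn, mul_zero]

theorem pderiv_comm' (i j : Fin 3) (p : P3) :
    pderiv i (pderiv j p) = pderiv j (pderiv i p) := by
  ext n
  rw [coeff_pderiv', coeff_pderiv', coeff_pderiv', coeff_pderiv',
    add_right_comm n (Finsupp.single i 1) (Finsupp.single j 1)]
  rcases eq_or_ne i j with rfl | hij
  · ring
  · rw [add_single_apply_ne n hij.symm, add_single_apply_ne n hij]
    ring

theorem degreeOf_pderiv_le {i j : Fin 3} {p : P3} {d : ℕ} (h : degreeOf j p ≤ d) :
    degreeOf j (pderiv i p) ≤ d := by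
  rw [degreeOf_le_iff] at h ⊢
  intro m hm
  rw [MvPolynomial.mem_support_iff, coeff_pderiv'] at hm
  have h2 : coeff (m + Finsupp.single i 1) p ≠ 0 := by
    intro h0; rw [h0, mul_zero] at hm; exact hm rfl
  have := h _ (MvPolynomial.mem_support_iff.mpr h2)
  rcases eq_or_ne i j with rfl | hij
  · rw [add_single_apply_same] at this; omega
  · rwa [add_single_apply_ne m hij] at this

theorem degreeOf_pderiv_self {i : Fin 3} {p : P3} {d : ℕ} (h : degreeOf i p ≤ d + 1) :
    degreeOf i (pderiv i p) ≤ d := by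
  rw [degreeOf_le_iff] at h ⊢
  intro m hm
  rw [MvPolynomial.mem_support_iff, coeff_pderiv'] at hm
  have h2 : coeff (m + Finsupp.single i 1) p ≠ 0 := by
    intro h0; rw [h0, mul_zero] at hm; exact hm rfl
  have := h _ (MvPolynomial.mem_support_iff.mpr h2)
  rw [add_single_apply_same] at this; omega

theorem degreeOf_integ_ne {i j : Fin 3} (hij : j ≠ i) {p : P3} {d : ℕ}
    (h : degreeOf j p ≤ d) : degreeOf j (integ i p) ≤ d := by
  rw [degreeOf_le_iff] at h ⊢
  intro m hm
  rw [MvPolynomial.mem_support_iff, coeff_integ] at hm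
  by_cases hmi : m i = 0
  · rw [if_pos hmi] at hm; exact absurd rfl hm
  · rw [if_neg hmi] at hm
    have h2 : coeff (m - Finsupp.single i 1) p ≠ 0 := by
      intro h0; rw [h0, zero_div] at hm; exact hm rfl
    have := h _ (MvPolynomial.mem_support_iff.mpr h2)
    rwa [sub_single_apply_ne (fun hh => hij hh.symm)] at this

theorem degreeOf_integ_self {i : Fin 3} {p : P3} {d : ℕ}
    (h : degreeOf i p ≤ d) : degreeOf i (integ i p) ≤ d + 1 := by
  rw [degreeOf_le_iff] at h ⊢
  intro m hm
  rw [MvPolynomial.mem_support_iff, coeff_integ] at hm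
  by_cases hmi : m i = 0
  · rw [if_pos hmi] at hm; exact absurd rfl hm
  · rw [if_neg hmi] at hm
    have h2 : coeff (m - Finsupp.single i 1) p ≠ 0 := by
      intro h0; rw [h0, zero_div] at hm; exact hm rfl
    have := h _ (MvPolynomial.mem_support_iff.mpr h2)
    rw [sub_single_apply_same] at this; omega

theorem degreeOf_sub0_le {i j : Fin 3} {p : P3} {d : ℕ} (h : degreeOf j p ≤ d) :
    degreeOf j (sub0 i p) ≤ d := by
  rw [degreeOf_le_iff] at h ⊢
  intro m hm
  rw [MvPolynomial.mem_support_iff, coeff_sub0] at hm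
  by_cases hmi : m i = 0
  · rw [if_pos hmi] at hm
    exact h _ (MvPolynomial.mem_support_iff.mpr hm)
  · rw [if_neg hmi] at hm; exact absurd rfl hm

theorem degreeOf_sub0_self {i : Fin 3} {p : P3} {d : ℕ} :
    degreeOf i (sub0 i p) ≤ d := by
  rw [degreeOf_le_iff]
  intro m hm
  rw [MvPolynomial.mem_support_iff, coeff_sub0] at hm
  by_cases hmi : m i = 0
  · omega
  · rw [if_neg hmi] at hm; exact absurd rfl hm

theorem eq_C_of_pderiv_eq_zero {q : P3} (h : ∀ i, pderiv i q = 0) :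
    q = C (coeff 0 q) := by
  ext n
  rw [coeff_C]
  by_cases hn : 0 = n
  · rw [if_pos hn, ← hn]
  · rw [if_neg hn]
    have : ∃ i, n i ≠ 0 := by
      by_contra hc
      push_neg at hc
      exact hn (Finsupp.ext fun i => (hc i).symm)
    obtain ⟨i, hi⟩ := this
    have h0 := congrArg (coeff (n - Finsupp.single i 1)) (h i)
    rw [coeff_pderiv', coeff_zero, sub_single_add_single hi] at h0
    rcases mul_eq_zero.mp h0 with h1 | h1
    · exact absurd h1 (ncast_ne_zero _ i)
    · exact h1

theorem integ_zero (i : Fin 3) : integ i (0 : P3) = 0 := by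
  ext n
  simp only [coeff_integ, coeff_zero, zero_div]
  split_ifs <;> rfl

theorem sub0_zero (i : Fin 3) : sub0 i (0 : P3) = 0 := by
  ext n
  simp only [coeff_sub0, coeff_zero]
  split_ifs <;> rfl

theorem integ_add (i : Fin 3) (p q : P3) : integ i (p + q) = integ i p + integ i q := by
  ext n
  simp only [coeff_integ, MvPolynomial.coeff_add]
  split_ifs
  · rw [add_zero]
  · rw [add_div]

theorem integ_neg (i : Fin 3) (p : P3) : integ i (-p) = -(integ i p) := by
  ext n
  simp only [coeff_integ, MvPolynomial.coeff_neg]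
  split_ifs
  · rw [neg_zero]
  · rw [neg_div]

/-- Exactness of the polynomial de Rham complex
`ℝ → Q_{k-1} --∇--> M_{[k-1]} --curl--> V_{[k-1]} --div--> Q_{k-2} → 0`:
the kernel of `∇` on `Q_{k-1}` is the constants, the kernel of `curl` in
`M_{[k-1]}` equals `∇Q_{k-1}`, the kernel of `div` in `V_{[k-1]}` equals
`curl M_{[k-1]}`, and `div` is onto `Q_{k-2}`. -/
theorem polynomial_deRham_exact (k : ℕ) (hk : 2 ≤ k) :
    (∀ q : P3, Qb (k - 1) q → (gradP q = 0 ↔ ∃ c : ℝ, q = C c)) ∧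
    (∀ u : Fin 3 → P3, Mb k u →
      (curlP u = 0 ↔ ∃ q : P3, Qb (k - 1) q ∧ u = gradP q)) ∧
    (∀ v : Fin 3 → P3, Vb k v →
      (divP v = 0 ↔ ∃ u : Fin 3 → P3, Mb k u ∧ v = curlP u)) ∧
    (∀ p : P3, Qb (k - 2) p → ∃ v : Fin 3 → P3, Vb k v ∧ divP v = p) := by
  have hk1 : k - 2 + 1 = k - 1 := by omega
  refine ⟨?_, ?_, ?_, ?_⟩
  · -- Part 1 : kernel of grad
    intro q _
    constructor
    · intro h
      exact ⟨coeff 0 q, eq_C_of_pderiv_eq_zero fun i => congrFun h i⟩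
    · rintro ⟨c, rfl⟩
      funext i
      simp [gradP, pderiv_C]
  · -- Part 2 : kernel of curl
    intro u hu
    constructor
    · intro hc
      have h12 : pderiv 2 (u 1) = pderiv 1 (u 2) := by
        have h := congrFun hc 0
        simp only [curlP, Matrix.cons_val_zero, Pi.zero_apply] at h
        exact (sub_eq_zero.mp h).symm
      have h02 : pderiv 0 (u 2) = pderiv 2 (u 0) := by
        have h := congrFun hc 1
        simp only [curlP, Matrix.cons_val_one, Matrix.head_cons, Pi.zero_apply] at h
        exact (sub_eq_zero.mp h).symm
      have h01 : pderiv 1 (u 0) = pderiv 0 (u 1) := by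
        have h := congrFun hc 2
        simp only [curlP, Matrix.cons_val_two, Matrix.tail_cons, Matrix.head_cons,
          Pi.zero_apply] at h
        exact (sub_eq_zero.mp h).symm
      refine ⟨integ 0 (u 0) + integ 1 (sub0 0 (u 1)) + integ 2 (sub0 1 (sub0 0 (u 2))),
        ?_, ?_⟩
      · intro j
        have b1 : degreeOf j (integ 0 (u 0)) ≤ k - 1 := by
          rcases eq_or_ne j 0 with rfl | hj
          · have h := hu 0 0
            rw [if_pos rfl] at h
            exact le_trans (degreeOf_integ_self h) (le_of_eq hk1)
          · have h := hu 0 j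
            rw [if_neg hj] at h
            exact degreeOf_integ_ne hj h
        have b2 : degreeOf j (integ 1 (sub0 0 (u 1))) ≤ k - 1 := by
          rcases eq_or_ne j 1 with rfl | hj
          · have h := hu 1 1
            rw [if_pos rfl] at h
            exact le_trans (degreeOf_integ_self (degreeOf_sub0_le h)) (le_of_eq hk1)
          · have h := hu 1 j
            rw [if_neg hj] at h
            exact degreeOf_integ_ne hj (degreeOf_sub0_le h)
        have b3 : degreeOf j (integ 2 (sub0 1 (sub0 0 (u 2)))) ≤ k - 1 := by
          rcases eq_or_ne j 2 with rfl | hj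
          · have h := hu 2 2
            rw [if_pos rfl] at h
            exact le_trans (degreeOf_integ_self (degreeOf_sub0_le (degreeOf_sub0_le h)))
              (le_of_eq hk1)
          · have h := hu 2 j
            rw [if_neg hj] at h
            exact degreeOf_integ_ne hj (degreeOf_sub0_le (degreeOf_sub0_le h))
        exact le_trans (degreeOf_add_le _ _ _)
          (max_le (le_trans (degreeOf_add_le _ _ _) (max_le b1 b2)) b3)
      · symm
        have g0 : pderiv 0 (integ 0 (u 0) + integ 1 (sub0 0 (u 1))
            + integ 2 (sub0 1 (sub0 0 (u 2)))) = u 0 := by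
          rw [map_add, map_add, pderiv_integ_self,
            pderiv_integ_comm (by decide : (0 : Fin 3) ≠ 1),
            pderiv_sub0_self, integ_zero,
            pderiv_integ_comm (by decide : (0 : Fin 3) ≠ 2),
            pderiv_sub0_comm (by decide : (0 : Fin 3) ≠ 1),
            pderiv_sub0_self, sub0_zero, integ_zero, add_zero, add_zero]
        have g1 : pderiv 1 (integ 0 (u 0) + integ 1 (sub0 0 (u 1))
            + integ 2 (sub0 1 (sub0 0 (u 2)))) = u 1 := by
          rw [map_add, map_add,
            pderiv_integ_comm (by decide : (1 : Fin 3) ≠ 0), h01,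
            integ_pderiv_self, pderiv_integ_self,
            pderiv_integ_comm (by decide : (1 : Fin 3) ≠ 2),
            pderiv_sub0_self, integ_zero]
          ring
        have g2 : pderiv 2 (integ 0 (u 0) + integ 1 (sub0 0 (u 1))
            + integ 2 (sub0 1 (sub0 0 (u 2)))) = u 2 := by
          rw [map_add, map_add,
            pderiv_integ_comm (by decide : (2 : Fin 3) ≠ 0), ← h02,
            integ_pderiv_self, pderiv_integ_self,
            pderiv_integ_comm (by decide : (2 : Fin 3) ≠ 1),
            pderiv_sub0_comm (by decide : (2 : Fin 3) ≠ 0), h12,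
            ← pderiv_sub0_comm (by decide : (1 : Fin 3) ≠ 0),
            integ_pderiv_self]
          ring
        funext i
        fin_cases i
        · exact g0
        · exact g1
        · exact g2
    · rintro ⟨q, _, rfl⟩
      funext i
      fin_cases i
      · show pderiv 1 (gradP q 2) - pderiv 2 (gradP q 1) = 0
        rw [gradP, gradP, pderiv_comm' 1 2, sub_self]
      · show pderiv 2 (gradP q 0) - pderiv 0 (gradP q 2) = 0
        rw [gradP, gradP, pderiv_comm' 2 0, sub_self]
      · show pderiv 0 (gradP q 1) - pderiv 1 (gradP q 0) = 0
        rw [gradP, gradP, pderiv_comm' 0 1, sub_self]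
  · -- Part 3 : kernel of div
    intro v hv
    constructor
    · intro hdiv
      rw [divP, Fin.sum_univ_three] at hdiv
      refine ⟨![integ 2 (v 1) - integ 1 (sub0 2 (v 2)), -(integ 2 (v 0)), 0], ?_, ?_⟩
      · intro i j
        fin_cases i
        · show degreeOf j (integ 2 (v 1) - integ 1 (sub0 2 (v 2)))
            ≤ if j = 0 then k - 2 else k - 1
          have bA : degreeOf j (integ 2 (v 1)) ≤ if j = 0 then k - 2 else k - 1 := by
            rcases eq_or_ne j 2 with rfl | hj
            · rw [if_neg (by decide)]
              have h := hv 1 2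
              rw [if_neg (by decide)] at h
              exact le_trans (degreeOf_integ_self h) (le_of_eq hk1)
            · have h := hv 1 j
              rcases eq_or_ne j 0 with rfl | hj0
              · rw [if_pos rfl]
                rw [if_neg (by decide)] at h
                exact degreeOf_integ_ne hj h
              · rw [if_neg hj0]
                have hb : degreeOf j (v 1) ≤ k - 1 := le_trans h (by split_ifs <;> omega)
                exact degreeOf_integ_ne hj hb
          have bB : degreeOf j (integ 1 (sub0 2 (v 2))) ≤ if j = 0 then k - 2 else k - 1 := by
            rcases eq_or_ne j 1 with rfl | hj
            · rw [if_neg (by decide)]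
              have h := hv 2 1
              rw [if_neg (by decide)] at h
              exact le_trans (degreeOf_integ_self (degreeOf_sub0_le h)) (le_of_eq hk1)
            · rcases eq_or_ne j 2 with rfl | hj2
              · rw [if_neg (by decide)]
                exact le_trans (degreeOf_integ_ne hj degreeOf_sub0_self) (Nat.zero_le _)
              · have h := hv 2 j
                rw [if_neg hj2] at h
                have : degreeOf j (integ 1 (sub0 2 (v 2))) ≤ k - 2 :=
                  degreeOf_integ_ne hj (degreeOf_sub0_le h)
                split_ifs <;> omega
          rw [sub_eq_add_neg]
          refine le_trans (degreeOf_add_le _ _ _) (max_le bA ?_)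
          rw [degreeOf_neg]
          exact bB
        · show degreeOf j (-(integ 2 (v 0))) ≤ if j = 1 then k - 2 else k - 1
          rw [degreeOf_neg]
          rcases eq_or_ne j 2 with rfl | hj
          · rw [if_neg (by decide)]
            have h := hv 0 2
            rw [if_neg (by decide)] at h
            exact le_trans (degreeOf_integ_self h) (le_of_eq hk1)
          · have h := hv 0 j
            rcases eq_or_ne j 1 with rfl | hj1
            · rw [if_pos rfl]
              rw [if_neg (by decide)] at h
              exact degreeOf_integ_ne hj h
            · rw [if_neg hj1]
              have hb : degreeOf j (integ 2 (v 0)) ≤ k - 1 := by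
                refine degreeOf_integ_ne hj (le_trans h ?_)
                split_ifs <;> omega
              exact hb
        · show degreeOf j (0 : P3) ≤ _
          rw [degreeOf_zero]
          exact Nat.zero_le _
      · symm
        funext i
        fin_cases i
        · show pderiv 1 (0 : P3) - pderiv 2 (-(integ 2 (v 0))) = v 0
          rw [map_zero, map_neg, pderiv_integ_self]
          ring
        · show pderiv 2 (integ 2 (v 1) - integ 1 (sub0 2 (v 2))) - pderiv 0 (0 : P3) = v 1
          rw [map_zero, map_sub, pderiv_integ_self,
            pderiv_integ_comm (by decide : (2 : Fin 3) ≠ 1),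
            pderiv_sub0_self, integ_zero]
          ring
        · show pderiv 0 (-(integ 2 (v 0)))
            - pderiv 1 (integ 2 (v 1) - integ 1 (sub0 2 (v 2))) = v 2
          rw [map_neg, map_sub,
            pderiv_integ_comm (by decide : (0 : Fin 3) ≠ 2),
            pderiv_integ_comm (by decide : (1 : Fin 3) ≠ 2),
            pderiv_integ_self]
          have hadd : pderiv 0 (v 0) + pderiv 1 (v 1) = -(pderiv 2 (v 2)) :=
            eq_neg_of_add_eq_zero_left hdiv
          have key : integ 2 (pderiv 0 (v 0)) + integ 2 (pderiv 1 (v 1))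
              = -(v 2 - sub0 2 (v 2)) := by
            rw [← integ_add, hadd, integ_neg, integ_pderiv_self]
          have expand : -(integ 2 (pderiv 0 (v 0)))
              - (integ 2 (pderiv 1 (v 1)) - sub0 2 (v 2))
              = -(integ 2 (pderiv 0 (v 0)) + integ 2 (pderiv 1 (v 1))) + sub0 2 (v 2) := by
            ring
          rw [expand, key]
          ring
    · rintro ⟨u, _, rfl⟩
      rw [divP, Fin.sum_univ_three]
      show pderiv 0 (pderiv 1 (u 2) - pderiv 2 (u 1))
        + pderiv 1 (pderiv 2 (u 0) - pderiv 0 (u 2))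
        + pderiv 2 (pderiv 0 (u 1) - pderiv 1 (u 0)) = 0
      rw [map_sub, map_sub, map_sub, pderiv_comm' 0 1 (u 2), pderiv_comm' 0 2 (u 1),
        pderiv_comm' 1 2 (u 0)]
      ring
  · -- Part 4 : div is onto
    intro p hp
    refine ⟨![integ 0 p, 0, 0], ?_, ?_⟩
    · intro i j
      fin_cases i
      · show degreeOf j (integ 0 p) ≤ if j = 0 then k - 1 else k - 2
        rcases eq_or_ne j 0 with rfl | hj
        · rw [if_pos rfl]
          exact le_trans (degreeOf_integ_self (hp 0)) (le_of_eq hk1)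
        · rw [if_neg hj]
          exact degreeOf_integ_ne hj (hp j)
      · show degreeOf j (0 : P3) ≤ _
        rw [degreeOf_zero]; exact Nat.zero_le _
      · show degreeOf j (0 : P3) ≤ _
        rw [degreeOf_zero]; exact Nat.zero_le _
    · rw [divP, Fin.sum_univ_three]
      show pderiv 0 (integ 0 p) + pderiv 1 (0 : P3) + pderiv 2 (0 : P3) = p
      rw [pderiv_integ_self, map_zero, map_zero, add_zero, add_zero]

end
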